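/- arXiv:2112.10906 — 4 statements merged into one kernel-verified Lean document; each statement's English description precedes it below -/
import Mathlib

section
/- Assume d₁ ∘ d₀ = 0 and that d₀ maps the orthogonal complement of V₀ (in W₀) into the orthogonal complement of V₁ (in W₁). Then the dimension of the kernel of the persistent sheaf Laplacian Δ equals dim(π(ker d₁)) − dim(range dᵗ), where π(ker d₁) is the image of ker d₁ under the orthogonal projection π : W₁ → V₁. (This is the paper's proposition that the nullity of Δ_q^{t,p} equals the dimension of the image of the induced map π• : H^q(X_{t+p}) → H^q(X_t) on sheaf cohomology, i.e. the persistent sheaf Betti number.) -/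
/-!
The Laplacian `Δ = L L† + dᵗ dᵗ†` is a sum of two positive operators, so its kernel is
`ker L† ⊓ ker dᵗ† = ker L† ⊓ (range dᵗ)ᗮ`. Since `𝔹ᗮ = d₁ (V₁ᗮ)`, a vector `v ∈ V₁` lies in
`ker L†` iff `d₁ v ∈ d₁ (V₁ᗮ)`, i.e. iff `v = π k` for some `k ∈ ker d₁`. Finally `d₁ ∘ d₀ = 0`
gives `range dᵗ ≤ π (ker d₁)`, so `ker Δ` is the orthogonal complement of `range dᵗ` inside
`π (ker d₁)`.
-/

noncomputable section

open LinearMap RealInnerProductSpace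

variable {W₀ W₁ W₂ : Type*}
  [NormedAddCommGroup W₀] [InnerProductSpace ℝ W₀] [FiniteDimensional ℝ W₀]
  [NormedAddCommGroup W₁] [InnerProductSpace ℝ W₁] [FiniteDimensional ℝ W₁]
  [NormedAddCommGroup W₂] [InnerProductSpace ℝ W₂] [FiniteDimensional ℝ W₂]

/-- The compressed map `dᵗ : V₀ → V₁`, namely `π ∘ d₀` restricted to `V₀`, where
`π` is the orthogonal projection of `W₁` onto `V₁`. -/
def compressedMap (d₀ : W₀ →ₗ[ℝ] W₁) (V₀ : Submodule ℝ W₀) (V₁ : Submodule ℝ W₁) :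
    V₀ →ₗ[ℝ] V₁ :=
  (V₁.orthogonalProjectionOnto).toLinearMap ∘ₗ d₀ ∘ₗ V₀.subtype

/-- The subspace `𝔹 = {e ∈ W₂ : d₁†(e) ∈ V₁}` of `W₂`. -/
def sheafB (d₁ : W₁ →ₗ[ℝ] W₂) (V₁ : Submodule ℝ W₁) : Submodule ℝ W₂ :=
  V₁.comap (LinearMap.adjoint d₁)

/-- The map `L : 𝔹 → V₁` obtained by restricting `d₁†` to `𝔹`. -/
def sheafL (d₁ : W₁ →ₗ[ℝ] W₂) (V₁ : Submodule ℝ W₁) : sheafB d₁ V₁ →ₗ[ℝ] V₁ :=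
  (LinearMap.adjoint d₁).restrict (fun _ hx => hx)

/-- The persistent sheaf Laplacian `Δ = L ∘ L† + dt ∘ dt† : V₁ → V₁`, built from
`d₁` (via `L`, the restriction of `d₁†` to `𝔹`) and a compressed map `dt`. -/
def PSL {V₀ : Submodule ℝ W₀} (d₁ : W₁ →ₗ[ℝ] W₂) (V₁ : Submodule ℝ W₁)
    (dt : V₀ →ₗ[ℝ] V₁) : V₁ →ₗ[ℝ] V₁ :=
  sheafL d₁ V₁ ∘ₗ LinearMap.adjoint (sheafL d₁ V₁) + dt ∘ₗ LinearMap.adjoint dt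

namespace LinearMap

variable {𝕜 E F G : Type*} [RCLike 𝕜]
  [NormedAddCommGroup E] [InnerProductSpace 𝕜 E] [FiniteDimensional 𝕜 E]
  [NormedAddCommGroup F] [InnerProductSpace 𝕜 F] [FiniteDimensional 𝕜 F]
  [NormedAddCommGroup G] [InnerProductSpace 𝕜 G] [FiniteDimensional 𝕜 G]

theorem ker_comp_adjoint_add_comp_adjoint (A : F →ₗ[𝕜] E) (B : G →ₗ[𝕜] E) :
    ker (A ∘ₗ A.adjoint + B ∘ₗ B.adjoint) = ker A.adjoint ⊓ ker B.adjoint := by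
  refine le_antisymm (fun x hx => ?_) (fun x ⟨hA, hB⟩ => by simp_all)
  have hnorm : ‖A.adjoint x‖ ^ 2 + ‖B.adjoint x‖ ^ 2 = 0 := by
    have := congrArg (fun y => RCLike.re (inner 𝕜 x y)) (mem_ker.mp hx)
    simpa [inner_add_right, ← adjoint_inner_left, inner_self_eq_norm_sq] using this
  obtain ⟨hA, hB⟩ := (add_eq_zero_iff_of_nonneg (sq_nonneg _) (sq_nonneg _)).mp hnorm
  exact ⟨by simpa using hA, by simpa using hB⟩

end LinearMap

theorem Submodule.orthogonal_comap_adjoint {𝕜 E F : Type*} [RCLike 𝕜]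
    [NormedAddCommGroup E] [InnerProductSpace 𝕜 E] [FiniteDimensional 𝕜 E]
    [NormedAddCommGroup F] [InnerProductSpace 𝕜 F] [FiniteDimensional 𝕜 F]
    (f : E →ₗ[𝕜] F) (K : Submodule 𝕜 E) : (K.comap f.adjoint)ᗮ = Kᗮ.map f := by
  rw [← (Kᗮ.map f).orthogonal_orthogonal]
  congr 1
  ext y
  conv_lhs => rw [mem_comap, ← K.orthogonal_orthogonal]
  simp only [mem_orthogonal, mem_map, forall_exists_index, and_imp, forall_apply_eq_imp_iff₂,
    LinearMap.adjoint_inner_right]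

theorem Submodule.mem_map_ker_iff_of_comp_eq_id {R M N P : Type*} [Ring R]
    [AddCommGroup M] [Module R M] [AddCommGroup N] [Module R N] [AddCommGroup P] [Module R P]
    {p : M →ₗ[R] N} {s : N →ₗ[R] M} (hs : p ∘ₗ s = LinearMap.id) (f : M →ₗ[R] P) (v : N) :
    v ∈ (LinearMap.ker f).map p ↔ f (s v) ∈ (LinearMap.ker p).map f := by
  have hps : p (s v) = v := LinearMap.congr_fun hs v
  constructor
  · rintro ⟨k, hk, rfl⟩
    exact ⟨s (p k) - k, by simp [hps], by simp_all⟩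
  · rintro ⟨w, hw, hfw⟩
    exact ⟨s v - w, by simp_all, by simp_all⟩

@[simp]
theorem coe_sheafL_apply (d₁ : W₁ →ₗ[ℝ] W₂) (V₁ : Submodule ℝ W₁) (e : sheafB d₁ V₁) :
    (sheafL d₁ V₁ e : W₁) = d₁.adjoint e :=
  rfl

theorem mem_ker_adjoint_sheafL_iff (d₁ : W₁ →ₗ[ℝ] W₂) (V₁ : Submodule ℝ W₁) (v : V₁) :
    v ∈ ker (sheafL d₁ V₁).adjoint ↔ d₁ v ∈ (sheafB d₁ V₁)ᗮ := by
  rw [← orthogonal_range, Submodule.mem_orthogonal, Submodule.mem_orthogonal]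
  simp only [mem_range, forall_exists_index, forall_apply_eq_imp_iff]
  exact Subtype.forall.trans <| forall₂_congr fun e _ => by
    rw [Submodule.coe_inner, coe_sheafL_apply, adjoint_inner_left]

theorem ker_adjoint_sheafL (d₁ : W₁ →ₗ[ℝ] W₂) (V₁ : Submodule ℝ W₁) :
    ker (sheafL d₁ V₁).adjoint = (ker d₁).map V₁.orthogonalProjectionOnto.toLinearMap := by
  ext v
  rw [mem_ker_adjoint_sheafL_iff, sheafB, Submodule.orthogonal_comap_adjoint,
    Submodule.mem_map_ker_iff_of_comp_eq_id (s := V₁.subtype)]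
  · rw [show ker (V₁.orthogonalProjectionOnto : W₁ →ₗ[ℝ] V₁) = V₁ᗮ from
      Submodule.ker_orthogonalProjectionOnto, Submodule.subtype_apply]
  · ext u
    simp

theorem ker_PSL {V₀ : Submodule ℝ W₀} (d₁ : W₁ →ₗ[ℝ] W₂) (V₁ : Submodule ℝ W₁)
    (dt : V₀ →ₗ[ℝ] V₁) :
    ker (PSL d₁ V₁ dt) =
      (ker d₁).map V₁.orthogonalProjectionOnto.toLinearMap ⊓ (range dt)ᗮ := by
  rw [PSL, ker_comp_adjoint_add_comp_adjoint, ker_adjoint_sheafL, orthogonal_range]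

omit [FiniteDimensional ℝ W₀] [FiniteDimensional ℝ W₂] in
theorem range_compressedMap_le (d₀ : W₀ →ₗ[ℝ] W₁) (d₁ : W₁ →ₗ[ℝ] W₂)
    (V₀ : Submodule ℝ W₀) (V₁ : Submodule ℝ W₁) (hd : d₁ ∘ₗ d₀ = 0) :
    range (compressedMap d₀ V₀ V₁) ≤ (ker d₁).map V₁.orthogonalProjectionOnto.toLinearMap := by
  rintro _ ⟨u, rfl⟩
  exact ⟨d₀ u, LinearMap.congr_fun hd u, rfl⟩

theorem finrank_ker_PSL_general (d₀ : W₀ →ₗ[ℝ] W₁) (d₁ : W₁ →ₗ[ℝ] W₂)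
    (V₀ : Submodule ℝ W₀) (V₁ : Submodule ℝ W₁)
    (hd : d₁ ∘ₗ d₀ = 0) :
    Module.finrank ℝ (LinearMap.ker (PSL d₁ V₁ (compressedMap d₀ V₀ V₁))) =
      Module.finrank ℝ ((LinearMap.ker d₁).map (V₁.orthogonalProjectionOnto).toLinearMap)
        - Module.finrank ℝ (LinearMap.range (compressedMap d₀ V₀ V₁)) := by
  have hsplit := Submodule.finrank_add_inf_finrank_orthogonal
    (range_compressedMap_le d₀ d₁ V₀ V₁ hd)
  rw [ker_PSL, inf_comm]
  omega

/-- the nullity of the persistent sheaf Laplacian equals the persistent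
sheaf Betti number `dim π(ker d₁) − dim (range dᵗ)`. -/
theorem finrank_ker_PSL (d₀ : W₀ →ₗ[ℝ] W₁) (d₁ : W₁ →ₗ[ℝ] W₂)
    (V₀ : Submodule ℝ W₀) (V₁ : Submodule ℝ W₁)
    (hd : d₁ ∘ₗ d₀ = 0)
    (hcompl : ∀ x ∈ V₀ᗮ, d₀ x ∈ V₁ᗮ) :
    Module.finrank ℝ (LinearMap.ker (PSL d₁ V₁ (compressedMap d₀ V₀ V₁))) =
      Module.finrank ℝ ((LinearMap.ker d₁).map (V₁.orthogonalProjectionOnto).toLinearMap)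
        - Module.finrank ℝ (LinearMap.range (compressedMap d₀ V₀ V₁)) :=
  finrank_ker_PSL_general d₀ d₁ V₀ V₁ hd
end
end

section
/- Let c₀ and c be orthonormal bases of V₀ and V₁ respectively (indexed by finite types), let b = (v₁, …, vₙ) be any basis of 𝔹, and let P be the Gram matrix P_{ij} = ⟪v_i, v_j⟫. Let Dᵗ be the matrix of dᵗ with respect to c₀ and c, and let A be the matrix of L : 𝔹 → V₁ with respect to b and c (the paper's matrix D_q^{*,t,p} of (ð_q^{t,p})*). Then P is invertible and the matrix of the persistent sheaf Laplacian Δ with respect to the orthonormal basis c is Dᵗ·(Dᵗ)ᵀ + A·P⁻¹·Aᵀ. -/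
noncomputable section

open LinearMap Matrix RealInnerProductSpace

variable {W₀ W₁ W₂ : Type*}
  [NormedAddCommGroup W₀] [InnerProductSpace ℝ W₀] [FiniteDimensional ℝ W₀]
  [NormedAddCommGroup W₁] [InnerProductSpace ℝ W₁] [FiniteDimensional ℝ W₁]
  [NormedAddCommGroup W₂] [InnerProductSpace ℝ W₂] [FiniteDimensional ℝ W₂]

/-!
In an orthonormal basis the matrix of an adjoint is the (conjugate) transpose, which gives the
term `Dᵗ (Dᵗ)ᵀ`. The basis `b` of `𝔹` need not be orthonormal: expanding `L† (c j)` in `b` and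
pairing with `b i` shows `P · [L†] = Aᵀ`, and `P` is invertible, being the Gram matrix of a linearly
independent family, so `[L†] = P⁻¹ Aᵀ`.
-/

section Gram

variable {𝕜 E F ι κ : Type*} [RCLike 𝕜]
  [NormedAddCommGroup E] [InnerProductSpace 𝕜 E]
  [NormedAddCommGroup F] [InnerProductSpace 𝕜 F]
  [Fintype ι] [Fintype κ]

theorem Module.Basis.gram_mulVec_repr (b : Module.Basis ι 𝕜 E) (x : E) :
    gram 𝕜 b *ᵥ b.repr x = fun i => inner 𝕜 (b i) x := by
  ext i
  conv_rhs => rw [← b.sum_repr x]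
  simp only [mulVec, dotProduct, gram_apply, inner_sum, inner_smul_right, mul_comm]

variable [DecidableEq ι]

open scoped ComplexOrder in
theorem Module.Basis.isUnit_gram (b : Module.Basis ι 𝕜 E) : IsUnit (gram 𝕜 b) :=
  (posDef_gram_of_linearIndependent b.linearIndependent).isUnit

variable [DecidableEq κ] [FiniteDimensional 𝕜 E] [FiniteDimensional 𝕜 F]

theorem gram_mul_toMatrix_adjoint (b : Module.Basis ι 𝕜 E) (c : OrthonormalBasis κ 𝕜 F)
    (f : E →ₗ[𝕜] F) :
    gram 𝕜 b * toMatrix c.toBasis b (adjoint f) = (toMatrix b c.toBasis f)ᴴ := by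
  ext i j
  have hcol := congrFun (b.gram_mulVec_repr (adjoint f (c j))) i
  rw [mulVec, dotProduct] at hcol
  simp only [Matrix.mul_apply, toMatrix_apply, OrthonormalBasis.coe_toBasis, hcol,
    adjoint_inner_right, conjTranspose_apply, OrthonormalBasis.coe_toBasis_repr_apply,
    OrthonormalBasis.repr_apply_apply]
  exact (inner_conj_symm _ _).symm

theorem toMatrix_adjoint_eq_inv_gram_mul (b : Module.Basis ι 𝕜 E) (c : OrthonormalBasis κ 𝕜 F)
    (f : E →ₗ[𝕜] F) :
    toMatrix c.toBasis b (adjoint f) = (gram 𝕜 b)⁻¹ * (toMatrix b c.toBasis f)ᴴ := by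
  rw [← gram_mul_toMatrix_adjoint b c f]
  exact (nonsing_inv_mul_cancel_left _ _
    ((Matrix.isUnit_iff_isUnit_det _).mp b.isUnit_gram)).symm

end Gram

/-- matrix representation of the persistent sheaf Laplacian. If `c₀, c`
are orthonormal bases of `V₀, V₁`, `b` is any basis of `𝔹` with Gram matrix `P`, `Dᵗ`
is the matrix of `dᵗ` and `A` the matrix of `L`, then `P` is invertible and the matrix
of `Δ` in the basis `c` is `Dᵗ (Dᵗ)ᵀ + A P⁻¹ Aᵀ`. -/
theorem toMatrix_PSL (d₀ : W₀ →ₗ[ℝ] W₁) (d₁ : W₁ →ₗ[ℝ] W₂)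
    (V₀ : Submodule ℝ W₀) (V₁ : Submodule ℝ W₁)
    {ι₀ ι ιB : Type*} [Fintype ι₀] [Fintype ι] [Fintype ιB]
    [DecidableEq ι₀] [DecidableEq ι] [DecidableEq ιB]
    (c₀ : OrthonormalBasis ι₀ ℝ V₀) (c : OrthonormalBasis ι ℝ V₁)
    (b : Module.Basis ιB ℝ (sheafB d₁ V₁))
    (P : Matrix ιB ιB ℝ) (hP : ∀ i j, P i j = ⟪b i, b j⟫) :
    IsUnit P ∧
      LinearMap.toMatrix c.toBasis c.toBasis (PSL d₁ V₁ (compressedMap d₀ V₀ V₁)) =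
        LinearMap.toMatrix c₀.toBasis c.toBasis (compressedMap d₀ V₀ V₁) *
          (LinearMap.toMatrix c₀.toBasis c.toBasis (compressedMap d₀ V₀ V₁))ᵀ +
        LinearMap.toMatrix b c.toBasis (sheafL d₁ V₁) * P⁻¹ *
          (LinearMap.toMatrix b c.toBasis (sheafL d₁ V₁))ᵀ := by
  have hgram : P = gram ℝ b := Matrix.ext hP
  subst hgram
  refine ⟨b.isUnit_gram, ?_⟩
  rw [PSL, map_add, toMatrix_comp c.toBasis b, toMatrix_adjoint_eq_inv_gram_mul,
    toMatrix_comp c.toBasis c₀.toBasis, toMatrix_adjoint, add_comm, ← Matrix.mul_assoc]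
  simp only [conjTranspose_eq_transpose_of_trivial]
end
end

section
/- Let J : W₂ → W₂ be a self-adjoint linear involution (J† = J and J ∘ J = id). Set d̄₁ := J ∘ d₁, 𝔹̄ := {e ∈ W₂ : d̄₁†(e) ∈ V₁}, and let Δ̄ be the persistent sheaf Laplacian built from d̄₁ and dᵗ. Then 𝔹̄ = J(𝔹) and Δ̄ = Δ. (Case III of the paper's proposition that the spectra of persistent sheaf Laplacians do not depend on the orientation: alternating the orientation of a (q+1)-cell of X_{t+p}.) -/
noncomputable section

open LinearMap RealInnerProductSpace

variable {W₀ W₁ W₂ : Type*}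
  [NormedAddCommGroup W₀] [InnerProductSpace ℝ W₀] [FiniteDimensional ℝ W₀]
  [NormedAddCommGroup W₁] [InnerProductSpace ℝ W₁] [FiniteDimensional ℝ W₁]
  [NormedAddCommGroup W₂] [InnerProductSpace ℝ W₂] [FiniteDimensional ℝ W₂]

/-!
Since `(J ∘ d₁)† = d₁† ∘ J†`, the space `𝔹̄` is the preimage of `𝔹` under `J†`, and `L̄ = L ∘ U`
with `U = J†|𝔹̄ : 𝔹̄ → 𝔹`. If `J† ∘ J = id`, the adjoint of `U` is `J|𝔹 : 𝔹 → 𝔹̄`, so `U ∘ U† = id`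
and `L̄ ∘ L̄† = L ∘ L†`, while the term `dᵗ ∘ dᵗ†` does not involve `d₁` at all. A self-adjoint
involution `J` satisfies `J† ∘ J = J ∘ J† = id`, which also makes `J†` inverse to `J`, so that
`𝔹̄ = (J†)⁻¹(𝔹) = J(𝔹)`.
-/

theorem comp_comp_adjoint_of_comp_adjoint_eq_id {E F G : Type*}
    [NormedAddCommGroup E] [InnerProductSpace ℝ E] [FiniteDimensional ℝ E]
    [NormedAddCommGroup F] [InnerProductSpace ℝ F] [FiniteDimensional ℝ F]
    [NormedAddCommGroup G] [InnerProductSpace ℝ G] [FiniteDimensional ℝ G]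
    (L : F →ₗ[ℝ] G) (U : E →ₗ[ℝ] F) (hU : U ∘ₗ adjoint U = LinearMap.id) :
    (L ∘ₗ U) ∘ₗ adjoint (L ∘ₗ U) = L ∘ₗ adjoint L := by
  rw [adjoint_comp, comp_assoc, ← comp_assoc (adjoint L) (adjoint U) U, hU, id_comp]

section

variable {W₃ : Type*} [NormedAddCommGroup W₃] [InnerProductSpace ℝ W₃] [FiniteDimensional ℝ W₃]

theorem sheafB_comp (J : W₂ →ₗ[ℝ] W₃) (d₁ : W₁ →ₗ[ℝ] W₂) (V₁ : Submodule ℝ W₁) :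
    sheafB (J ∘ₗ d₁) V₁ = (sheafB d₁ V₁).comap (adjoint J) := by
  rw [sheafB, sheafB, adjoint_comp, Submodule.comap_comp]

theorem sheafB_comp_of_unitary (J : W₂ →ₗ[ℝ] W₃) (d₁ : W₁ →ₗ[ℝ] W₂) (V₁ : Submodule ℝ W₁)
    (hJ : adjoint J ∘ₗ J = LinearMap.id) (hJ' : J ∘ₗ adjoint J = LinearMap.id) :
    sheafB (J ∘ₗ d₁) V₁ = (sheafB d₁ V₁).map J :=
  (sheafB_comp J d₁ V₁).trans
    (Submodule.map_equiv_eq_comap_symm (LinearEquiv.ofLinearMap J (adjoint J) hJ' hJ) _).symm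

def sheafBCompMap (J : W₂ →ₗ[ℝ] W₃) (d₁ : W₁ →ₗ[ℝ] W₂) (V₁ : Submodule ℝ W₁) :
    sheafB (J ∘ₗ d₁) V₁ →ₗ[ℝ] sheafB d₁ V₁ :=
  (adjoint J).restrict fun x hx => by rwa [sheafB_comp] at hx

theorem sheafL_comp (J : W₂ →ₗ[ℝ] W₃) (d₁ : W₁ →ₗ[ℝ] W₂) (V₁ : Submodule ℝ W₁) :
    sheafL (J ∘ₗ d₁) V₁ = sheafL d₁ V₁ ∘ₗ sheafBCompMap J d₁ V₁ := by
  ext x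
  exact LinearMap.congr_fun (adjoint_comp J d₁) x

theorem adjoint_sheafBCompMap (J : W₂ →ₗ[ℝ] W₃) (d₁ : W₁ →ₗ[ℝ] W₂) (V₁ : Submodule ℝ W₁)
    (hJ : adjoint J ∘ₗ J = LinearMap.id) :
    adjoint (sheafBCompMap J d₁ V₁) = J.restrict (p := sheafB d₁ V₁) (q := sheafB (J ∘ₗ d₁) V₁)
      (fun x hx => by rwa [sheafB_comp, Submodule.mem_comap, ← comp_apply, hJ]) := by
  symm
  rw [eq_adjoint_iff]
  intro x y
  exact (adjoint_inner_right J (x : W₂) (y : W₃)).symm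

theorem sheafBCompMap_comp_adjoint (J : W₂ →ₗ[ℝ] W₃) (d₁ : W₁ →ₗ[ℝ] W₂) (V₁ : Submodule ℝ W₁)
    (hJ : adjoint J ∘ₗ J = LinearMap.id) :
    sheafBCompMap J d₁ V₁ ∘ₗ adjoint (sheafBCompMap J d₁ V₁) = LinearMap.id := by
  rw [adjoint_sheafBCompMap J d₁ V₁ hJ]
  ext x
  exact LinearMap.congr_fun hJ x

theorem PSL_comp_of_isometry {V₀ : Submodule ℝ W₀} (J : W₂ →ₗ[ℝ] W₃) (d₁ : W₁ →ₗ[ℝ] W₂)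
    (V₁ : Submodule ℝ W₁) (dt : V₀ →ₗ[ℝ] V₁) (hJ : adjoint J ∘ₗ J = LinearMap.id) :
    PSL (J ∘ₗ d₁) V₁ dt = PSL d₁ V₁ dt := by
  rw [PSL, PSL, sheafL_comp,
    comp_comp_adjoint_of_comp_adjoint_eq_id _ _ (sheafBCompMap_comp_adjoint J d₁ V₁ hJ)]

end

/-- Case III of orientation independence: if `J : W₂ → W₂` is a
self-adjoint involution, then for `d̄₁ = J ∘ d₁` one has `𝔹̄ = J(𝔹)` and the
persistent sheaf Laplacian built from `d̄₁` and `dᵗ` equals `Δ`. -/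
theorem PSL_postcomp_involution (d₀ : W₀ →ₗ[ℝ] W₁) (d₁ : W₁ →ₗ[ℝ] W₂)
    (V₀ : Submodule ℝ W₀) (V₁ : Submodule ℝ W₁)
    (J : W₂ →ₗ[ℝ] W₂)
    (hJa : LinearMap.adjoint J = J)
    (hJi : J ∘ₗ J = LinearMap.id) :
    sheafB (J ∘ₗ d₁) V₁ = (sheafB d₁ V₁).map J ∧
      PSL (J ∘ₗ d₁) V₁ (compressedMap d₀ V₀ V₁) =
        PSL d₁ V₁ (compressedMap d₀ V₀ V₁) := by
  have hJ : adjoint J ∘ₗ J = LinearMap.id := by rw [hJa, hJi]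
  have hJ' : J ∘ₗ adjoint J = LinearMap.id := by rw [hJa, hJi]
  exact ⟨sheafB_comp_of_unitary J d₁ V₁ hJ hJ', PSL_comp_of_isometry J d₁ V₁ _ hJ⟩
end
end

section
/- For all real numbers q₀, q₁, q₂, let D₀ be the 3×3 real matrix [[−q₁, q₀, 0], [−q₂, 0, q₀], [0, −q₂, q₁]] (rows indexed by the edges 01, 02, 12) and D₁ the 1×3 matrix [q₂, −q₁, q₀]. Then D₀·D₀ᵀ + D₁ᵀ·D₁ = (q₀²+q₁²+q₂²)·I₃, where I₃ is the 3×3 identity matrix. (This is the paper's computation that the 1-st sheaf Laplacian Δ₁ of the labeled 2-simplex with unit edge lengths is the scalar matrix (q₀²+q₁²+q₂²)·I, so its only eigenvalue is q₀²+q₁²+q₂².) -/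
open Matrix

/-- the 1-st sheaf Laplacian `Δ₁ = d₀ d₀† + d₁† d₁` of the labeled
2-simplex with unit edge lengths is the scalar matrix `(q₀² + q₁² + q₂²) I₃`. -/
theorem laplacian_one_two_simplex (q₀ q₁ q₂ : ℝ) :
    (!![-q₁, q₀, 0; -q₂, 0, q₀; 0, -q₂, q₁] : Matrix (Fin 3) (Fin 3) ℝ) *
        (!![-q₁, q₀, 0; -q₂, 0, q₀; 0, -q₂, q₁] : Matrix (Fin 3) (Fin 3) ℝ)ᵀ +
      (!![q₂, -q₁, q₀] : Matrix (Fin 1) (Fin 3) ℝ)ᵀ *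
        (!![q₂, -q₁, q₀] : Matrix (Fin 1) (Fin 3) ℝ) =
      (q₀ ^ 2 + q₁ ^ 2 + q₂ ^ 2) • (1 : Matrix (Fin 3) (Fin 3) ℝ) := by
  ext i j
  fin_cases i <;> fin_cases j <;>
    simp [Matrix.mul_apply, Fin.sum_univ_succ, Matrix.one_apply, Matrix.transpose_apply, Matrix.vecHead, Matrix.vecTail, Matrix.vecMul, dotProduct] <;> ring
end
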